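/- arXiv:math/0606313 — 2 statements merged into one kernel-verified Lean document; each statement's English description precedes it below -/
import Mathlib

section
/- Let (Ω, 𝒜, ℙ) be a probability space with a filtration (ℱ_t)_{t≥0}, let τ > 0, δ > 0, and let X : [0,τ] → ℝ be continuous with X(c) ≥ δ for all c ∈ [0,τ]; set s(x) := ∫₀ˣ X(u) du. Let ζ = (ζ_t)_{t≥0} be an (ℱ_t)-adapted process with continuous paths taking values in [0,τ], and suppose that for every continuously differentiable g : [0,τ] → ℝ with g(0) = g(τ) = 0, the process t ↦ ∫₀^{ζ_t} X(u) g(u) du − ∫₀ᵗ 2 g'(ζ_u) du is an (ℱ_t)-martingale. Then for every twice continuously differentiable H : [0, s(τ)] → ℝ with H'(0) = H'(s(τ)) = 0, the process t ↦ H(s(ζ_t)) − ∫₀ᵗ 2·X(ζ_u)·H''(s(ζ_u)) du is an (ℱ_t)-martingale. -/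
open Set intervalIntegral MeasureTheory

/-!
Put `g := H' ∘ s`. Since `s' = X`, the chain rule gives `g' = X · (H'' ∘ s)`, which is
continuous, and `g` vanishes at `0` and `τ` because `H'` vanishes at `s 0 = 0` and `s τ`;
so `g` is an admissible test function. By the fundamental theorem of calculus applied to
`H ∘ s`, whose derivative is `X · g`, we have `∫₀ˣ X g = H (s x) - H 0`, so the martingale
given by `g` is the process of the conclusion minus the constant `H 0`.
-/

theorem integral_eq_sub_of_hasDerivWithinAt_Icc {f f' : ℝ → ℝ} {a b : ℝ} (hab : a ≤ b)
    (hf : ∀ x ∈ Icc a b, HasDerivWithinAt f (f' x) (Icc a b) x)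
    (hint : IntervalIntegrable f' volume a b) : ∫ x in a..b, f' x = f b - f a :=
  integral_eq_sub_of_hasDerivAt_of_le hab (fun x hx => (hf x hx).continuousWithinAt)
    (fun x hx => (hf x (Ioo_subset_Icc_self hx)).hasDerivAt (Icc_mem_nhds hx.1 hx.2)) hint

theorem monotoneOn_Icc_of_hasDerivWithinAt_nonneg {f f' : ℝ → ℝ} {a b : ℝ}
    (hf : ∀ x ∈ Icc a b, HasDerivWithinAt f (f' x) (Icc a b) x)
    (hf' : ∀ x ∈ Icc a b, 0 ≤ f' x) : MonotoneOn f (Icc a b) := by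
  refine monotoneOn_of_hasDerivWithinAt_nonneg (convex_Icc a b)
    (fun x hx => (hf x hx).continuousWithinAt) (fun x hx => ?_)
    (fun x hx => hf' x (interior_subset hx))
  exact (hf x (interior_subset hx)).mono interior_subset

noncomputable def scaleFun (X : ℝ → ℝ) (a x : ℝ) : ℝ :=
  ∫ u in a..x, X u

section ScaleFun

variable {X : ℝ → ℝ} {a b : ℝ}

@[simp]
theorem scaleFun_self (X : ℝ → ℝ) (a : ℝ) : scaleFun X a a = 0 :=
  integral_same

theorem hasDerivWithinAt_scaleFun (hX : ContinuousOn X (Icc a b)) {c : ℝ} (hc : c ∈ Icc a b) :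
    HasDerivWithinAt (scaleFun X a) (X c) (Icc a b) c := by
  have : Fact (c ∈ Icc a b) := ⟨hc⟩
  exact integral_hasDerivWithinAt_right
    ((hX.mono (Icc_subset_Icc le_rfl hc.2)).intervalIntegrable_of_Icc hc.1)
    (hX.stronglyMeasurableAtFilter_nhdsWithin measurableSet_Icc c) (hX c hc)

theorem continuousOn_scaleFun (hX : ContinuousOn X (Icc a b)) :
    ContinuousOn (scaleFun X a) (Icc a b) :=
  fun _ hc => (hasDerivWithinAt_scaleFun hX hc).continuousWithinAt

theorem mapsTo_scaleFun (hX : ContinuousOn X (Icc a b)) (hX₀ : ∀ c ∈ Icc a b, 0 ≤ X c) :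
    MapsTo (scaleFun X a) (Icc a b) (Icc 0 (scaleFun X a b)) := by
  have hmono := monotoneOn_Icc_of_hasDerivWithinAt_nonneg
    (fun _ hc => hasDerivWithinAt_scaleFun hX hc) hX₀
  intro x hx
  have ha : a ∈ Icc a b := ⟨le_rfl, hx.1.trans hx.2⟩
  have hb : b ∈ Icc a b := ⟨hx.1.trans hx.2, le_rfl⟩
  exact ⟨scaleFun_self X a ▸ hmono ha hx hx.1, hmono hx hb hx.2⟩

variable {F F' : ℝ → ℝ}

theorem hasDerivWithinAt_comp_scaleFun (hX : ContinuousOn X (Icc a b))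
    (hX₀ : ∀ c ∈ Icc a b, 0 ≤ X c)
    (hF : ∀ y ∈ Icc 0 (scaleFun X a b), HasDerivWithinAt F (F' y) (Icc 0 (scaleFun X a b)) y)
    {c : ℝ} (hc : c ∈ Icc a b) :
    HasDerivWithinAt (fun x => F (scaleFun X a x)) (X c * F' (scaleFun X a c)) (Icc a b) c := by
  rw [mul_comm]
  exact (hF _ (mapsTo_scaleFun hX hX₀ hc)).comp c (hasDerivWithinAt_scaleFun hX hc)
    (mapsTo_scaleFun hX hX₀)

theorem integral_mul_comp_scaleFun (hX : ContinuousOn X (Icc a b))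
    (hX₀ : ∀ c ∈ Icc a b, 0 ≤ X c)
    (hF : ∀ y ∈ Icc 0 (scaleFun X a b), HasDerivWithinAt F (F' y) (Icc 0 (scaleFun X a b)) y)
    (hF' : ContinuousOn F' (Icc 0 (scaleFun X a b))) {x : ℝ} (hx : x ∈ Icc a b) :
    ∫ u in a..x, X u * F' (scaleFun X a u) = F (scaleFun X a x) - F 0 := by
  have hsub : Icc a x ⊆ Icc a b := Icc_subset_Icc le_rfl hx.2
  have hcont : ContinuousOn (fun u => X u * F' (scaleFun X a u)) (Icc a b) :=
    hX.mul (hF'.comp (continuousOn_scaleFun hX) (mapsTo_scaleFun hX hX₀))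
  rw [integral_eq_sub_of_hasDerivWithinAt_Icc hx.1
      (fun u hu => (hasDerivWithinAt_comp_scaleFun hX hX₀ hF (hsub hu)).mono hsub)
      ((hcont.mono hsub).intervalIntegrable_of_Icc hx.1), scaleFun_self]

end ScaleFun

theorem scale_transform_martingale_problem_general
    {Ω : Type*} {m : MeasurableSpace Ω} (μ : Measure Ω) [IsProbabilityMeasure μ]
    (ℱ : Filtration ℝ m)
    (τ δ : ℝ) (hδ : 0 < δ)
    (X : ℝ → ℝ) (hX : ContinuousOn X (Icc 0 τ)) (hXδ : ∀ c ∈ Icc (0:ℝ) τ, δ ≤ X c)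
    (s : ℝ → ℝ) (hs : ∀ x, s x = ∫ u in (0:ℝ)..x, X u)
    (ζ : ℝ → Ω → ℝ)
    (hrange : ∀ t ω, ζ t ω ∈ Icc (0:ℝ) τ)
    (hMP : ∀ g g' : ℝ → ℝ,
      (∀ c ∈ Icc (0:ℝ) τ, HasDerivWithinAt g (g' c) (Icc 0 τ) c) →
      ContinuousOn g' (Icc 0 τ) → g 0 = 0 → g τ = 0 →
      Martingale
        (fun t ω => (∫ u in (0:ℝ)..(ζ t ω), X u * g u) - ∫ u in (0:ℝ)..t, 2 * g' (ζ u ω))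
        ℱ μ)
    (H H' H'' : ℝ → ℝ)
    (hH : ∀ y ∈ Icc (0:ℝ) (s τ), HasDerivWithinAt H (H' y) (Icc 0 (s τ)) y)
    (hH' : ∀ y ∈ Icc (0:ℝ) (s τ), HasDerivWithinAt H' (H'' y) (Icc 0 (s τ)) y)
    (hH'' : ContinuousOn H'' (Icc 0 (s τ)))
    (hH'0 : H' 0 = 0) (hH'sτ : H' (s τ) = 0) :
    Martingale
      (fun t ω => H (s (ζ t ω)) - ∫ u in (0:ℝ)..t, 2 * X (ζ u ω) * H'' (s (ζ u ω)))
      ℱ μ := by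
  obtain rfl : s = scaleFun X 0 := funext hs
  have hX₀ : ∀ c ∈ Icc (0:ℝ) τ, 0 ≤ X c := fun c hc => hδ.le.trans (hXδ c hc)
  have hH'cont : ContinuousOn H' (Icc 0 (scaleFun X 0 τ)) :=
    fun y hy => (hH' y hy).continuousWithinAt
  have hM := hMP (fun c => H' (scaleFun X 0 c)) (fun c => X c * H'' (scaleFun X 0 c))
    (fun c hc => hasDerivWithinAt_comp_scaleFun hX hX₀ hH' hc)
    (hX.mul (hH''.comp (continuousOn_scaleFun hX) (mapsTo_scaleFun hX hX₀)))
    (by rw [scaleFun_self, hH'0]) hH'sτ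
  convert hM.add (martingale_const ℱ μ (H 0)) using 1
  funext t ω
  simp only [Pi.add_apply, integral_mul_comp_scaleFun hX hX₀ hH hH'cont (hrange t ω), mul_assoc]
  ring

/-- Lemma 6.6 (Relation to Brownian motion): if `ζ` solves the martingale problem for
`A^δ f = 2((1/X)f')'` — phrased via the domain characterization (6.10): for every `C¹`
function `g` on `[0,τ]` vanishing at the endpoints, the process
`t ↦ ∫₀^{ζ_t} X(u) g(u) du − ∫₀ᵗ 2 g'(ζ_u) du` is a martingale — then `B_t := s(ζ_t)`,
with scale function `s(x) = ∫₀ˣ X(u) du`, solves the martingale problem for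
`B^δ H = 2·X_{s⁻¹(·)}·H''`: for every `C²` function `H` on `[0,s(τ)]` with
`H'(0) = H'(s(τ)) = 0`, the process `t ↦ H(s(ζ_t)) − ∫₀ᵗ 2 X(ζ_u) H''(s(ζ_u)) du`
is a martingale. -/
theorem scale_transform_martingale_problem
    {Ω : Type*} {m : MeasurableSpace Ω} (μ : Measure Ω) [IsProbabilityMeasure μ]
    (ℱ : Filtration ℝ m)
    (τ δ : ℝ) (hτ : 0 < τ) (hδ : 0 < δ)
    (X : ℝ → ℝ) (hX : ContinuousOn X (Icc 0 τ)) (hXδ : ∀ c ∈ Icc (0:ℝ) τ, δ ≤ X c)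
    (s : ℝ → ℝ) (hs : ∀ x, s x = ∫ u in (0:ℝ)..x, X u)
    (ζ : ℝ → Ω → ℝ)
    (hadapted : Adapted ℱ ζ)
    (hcont : ∀ ω, Continuous fun t => ζ t ω)
    (hrange : ∀ t ω, ζ t ω ∈ Icc (0:ℝ) τ)
    (hMP : ∀ g g' : ℝ → ℝ,
      (∀ c ∈ Icc (0:ℝ) τ, HasDerivWithinAt g (g' c) (Icc 0 τ) c) →
      ContinuousOn g' (Icc 0 τ) → g 0 = 0 → g τ = 0 →
      Martingale
        (fun t ω => (∫ u in (0:ℝ)..(ζ t ω), X u * g u) - ∫ u in (0:ℝ)..t, 2 * g' (ζ u ω))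
        ℱ μ)
    (H H' H'' : ℝ → ℝ)
    (hH : ∀ y ∈ Icc (0:ℝ) (s τ), HasDerivWithinAt H (H' y) (Icc 0 (s τ)) y)
    (hH' : ∀ y ∈ Icc (0:ℝ) (s τ), HasDerivWithinAt H' (H'' y) (Icc 0 (s τ)) y)
    (hH'' : ContinuousOn H'' (Icc 0 (s τ)))
    (hH'0 : H' 0 = 0) (hH'sτ : H' (s τ) = 0) :
    Martingale
      (fun t ω => H (s (ζ t ω)) - ∫ u in (0:ℝ)..t, 2 * X (ζ u ω) * H'' (s (ζ u ω)))
      ℱ μ :=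
  scale_transform_martingale_problem_general μ ℱ τ δ hδ X hX hXδ s hs ζ hrange hMP H H' H'' hH hH'
    hH'' hH'0 hH'sτ
end

section
/- Let (T,d) be a metric space satisfying the four point condition, let ρ ∈ T, and assume the ancestor property: for every x ∈ T and every r ∈ [0, d(ρ,x)] there exists y ∈ T with d(ρ,y) = r and d(ρ,y) + d(y,x) = d(ρ,x). For 0 < ε ≤ t define the ancestor set A^t_{t−ε} := { y ∈ T : d(ρ,y) = t−ε and there exists x ∈ T with d(ρ,x) ≤ t, d(ρ,y) + d(y,x) = d(ρ,x), and d(y,x) ≥ ε }. Then for every m ∈ ℕ, every point of T is within distance 2^{-m} of the set N_m := {ρ} ∪ ⋃_{k≥1} A^{k·2^{-(m+1)}}_{(k−1)·2^{-(m+1)}} (with ε = 2^{-(m+1)}). In particular, if N_m is finite for every m ∈ ℕ, then T is totally bounded. -/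
open Set

/-- The set `A^t_{t−ε}` of ancestors at height `t − ε` of the points of height at most `t`:
points `y` at distance `t − ε` from the root `ρ` lying on the arc from `ρ` to some point
`x` with `d(ρ,x) ≤ t` and `d(y,x) ≥ ε`. -/
def ancestorSet {T : Type*} [MetricSpace T] (ρ : T) (t ε : ℝ) : Set T :=
  {y : T | dist ρ y = t - ε ∧
    ∃ x : T, dist ρ x ≤ t ∧ dist ρ y + dist y x = dist ρ x ∧ ε ≤ dist y x}

/-- The candidate `2^{-m}`-net `N_m = {ρ} ∪ ⋃_{k≥1} A^{k·2^{-(m+1)}}_{(k−1)·2^{-(m+1)}}`. -/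
def ancestorNet {T : Type*} [MetricSpace T] (ρ : T) (m : ℕ) : Set T :=
  {ρ} ∪ ⋃ k ∈ {k : ℕ | 1 ≤ k},
    ancestorSet ρ ((k : ℝ) * 2 ^ (-(m + 1 : ℤ))) (2 ^ (-(m + 1 : ℤ)))

/-- Content of the proof of Lemma 5.1: in a metric space with the four point condition
and the ancestor property, every point lies within distance `2^{-m}` of the net `N_m`;
in particular, if all the nets `N_m` are finite then the space is totally bounded. -/
theorem ancestor_sets_form_nets {T : Type*} [MetricSpace T]
    (four : ∀ x₁ x₂ x₃ x₄ : T,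
      dist x₁ x₂ + dist x₃ x₄ ≤ max (dist x₁ x₃ + dist x₂ x₄) (dist x₁ x₄ + dist x₂ x₃))
    (ρ : T)
    (anc : ∀ x : T, ∀ r ∈ Icc (0:ℝ) (dist ρ x),
      ∃ y : T, dist ρ y = r ∧ dist ρ y + dist y x = dist ρ x) :
    (∀ m : ℕ, ∀ x : T, ∃ y ∈ ancestorNet ρ m, dist x y ≤ 2 ^ (-(m : ℤ))) ∧
    ((∀ m : ℕ, (ancestorNet ρ m).Finite) → TotallyBounded (univ : Set T)) := by
  have key : ∀ m : ℕ, ∀ x : T, ∃ y ∈ ancestorNet ρ m, dist x y ≤ 2 ^ (-(m : ℤ)) := by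
    intro m x
    set ε : ℝ := 2 ^ (-(m + 1 : ℤ)) with hε
    have hεpos : 0 < ε := by positivity
    have hεle : 2 * ε ≤ 2 ^ (-(m : ℤ)) := by
      have : (2:ℝ) ^ (-(m : ℤ)) = 2 ^ (-(m + 1 : ℤ)) * 2 := by
        rw [← zpow_add_one₀ (by norm_num : (2:ℝ) ≠ 0)]
        norm_num
      rw [this]; nlinarith
    set d : ℝ := dist ρ x with hd
    have hd0 : 0 ≤ d := dist_nonneg
    by_cases hcase : d < ε
    · refine ⟨ρ, Or.inl rfl, ?_⟩
      rw [dist_comm]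
      nlinarith
    · push_neg at hcase
      set k : ℕ := ⌊d / ε⌋₊ with hk
      clear_value k
      have hk1 : 1 ≤ k := hk ▸ (Nat.one_le_floor_iff _).mpr ((one_le_div hεpos).mpr hcase)
      have hkle : (k : ℝ) * ε ≤ d := by
        have := hk ▸ Nat.floor_le (by positivity : 0 ≤ d / ε)
        calc (k : ℝ) * ε ≤ (d / ε) * ε := by nlinarith
          _ = d := div_mul_cancel₀ d hεpos.ne'
      have hklt : d < ((k : ℝ) + 1) * ε := by
        have := hk ▸ Nat.lt_floor_add_one (d / ε)
        calc d = (d / ε) * ε := (div_mul_cancel₀ d hεpos.ne').symm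
          _ < ((k : ℝ) + 1) * ε := by nlinarith
      obtain ⟨j, rfl⟩ : ∃ j, k = j + 1 := ⟨k - 1, (Nat.succ_pred_eq_of_pos hk1).symm⟩
      have hj1 : ((j : ℝ) + 1) = ((j + 1 : ℕ) : ℝ) := by push_cast; ring
      obtain ⟨y, hy1, hy2⟩ := anc x ((j : ℝ) * ε)
        ⟨by positivity, by nlinarith [hj1]⟩
      obtain ⟨x', hx'1, hx'2⟩ := anc x (((j : ℝ) + 1) * ε)
        ⟨by positivity, by nlinarith [hj1]⟩
      -- dist y x' = ε
      have hlow : ε ≤ dist y x' := by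
        have htri : dist y x ≤ dist y x' + dist x' x := dist_triangle y x' x
        nlinarith
      have hup : dist y x' ≤ ε := by
        have h4 := four ρ x y x'
        rcases le_max_iff.mp h4 with h | h
        · rw [dist_comm y x'] at h ⊢
          nlinarith [dist_comm x x', dist_comm x y]
        · nlinarith [dist_comm x x', dist_comm x y]
      have heq : dist y x' = ε := le_antisymm hup hlow
      refine ⟨y, Or.inr ?_, ?_⟩
      · rw [mem_iUnion₂]
        refine ⟨j + 1, Nat.le_add_left 1 j, ?_, x', ?_, ?_, heq.ge⟩
        · rw [hy1, ← hj1]; ring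
        · rw [hx'1, ← hε]; push_cast; exact le_rfl
        · rw [hy1, heq, hx'1]; ring
      · rw [dist_comm]
        nlinarith [hj1]
  refine ⟨key, fun hfin => ?_⟩
  rw [Metric.totallyBounded_iff]
  intro δ hδ
  obtain ⟨m, hm⟩ := exists_pow_lt_of_lt_one hδ (by norm_num : (1:ℝ)/2 < 1)
  refine ⟨ancestorNet ρ m, hfin m, fun x _ => ?_⟩
  obtain ⟨y, hy, hxy⟩ := key m x
  refine mem_iUnion₂.mpr ⟨y, hy, ?_⟩
  have h2 : (2:ℝ) ^ (-(m : ℤ)) = (1/2) ^ m := by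
    rw [one_div, inv_pow, ← zpow_natCast, ← zpow_neg]
  rw [h2] at hxy
  exact Metric.mem_ball.mpr (lt_of_le_of_lt hxy hm)
end
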